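/- arXiv:0908.2030 — 2 statements merged into one kernel-verified Lean document; each statement's English description precedes it below -/
import Mathlib

section
/- Let H₁ and H₂ be complex Banach spaces, U ⊆ ℂ an open connected set, and f : U → B(H₁,H₂) an analytic map into the Banach space of continuous linear operators with the operator norm, such that f(z) is Fredholm for every z ∈ U and f(z₀) is bijective for at least one point z₀ ∈ U. Then the set D = {z ∈ U : f(z) is not bijective} is discrete and closed in U, i.e. D has no accumulation point in U. -/
/-!
Near a point `z₁`, border `f z` by a projection `p` onto `N = ker (f z₁)` and by the inclusion of
a complement `Y` of `range (f z₁)`. The bordered operator `[[f z, ι], [p, 0]]` is invertible at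
`z₁`, hence near `z₁` with analytic inverse, and `f z` is bijective iff the corner `N → Y` of
that inverse is. This reduces the question to an analytic family of maps between
finite-dimensional spaces, where bijectivity is the non-vanishing of an analytic determinant
(or impossible, if `dim N ≠ dim Y`). So near every point of `U`, `f` is either never bijective
or bijective off that point, and connectedness of `U` propagates the second alternative from `z₀`.
-/

open Filter Topology Function
open scoped ContDiff

section Schur

variable {R E F N Y : Type*} [Ring R] [AddCommGroup E] [Module R E] [AddCommGroup F] [Module R F]
  [AddCommGroup N] [Module R N] [AddCommGroup Y] [Module R Y]
  {T : E →ₗ[R] F} {ι : Y →ₗ[R] F} {p : E →ₗ[R] N}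

/- If `G = [[T, ι], [p, 0]]` is invertible, the corner `N → Y` of `G⁻¹` is a Schur complement
of `T`: it is injective or surjective exactly when `T` is. -/
theorem injective_iff_injective_of_bordered (G : (E × Y) ≃ₗ[R] (F × N))
    (hG : ∀ v, G v = (T v.1 + ι v.2, p v.1)) :
    Injective T ↔
      Injective (LinearMap.snd R E Y ∘ₗ G.symm.toLinearMap ∘ₗ LinearMap.inr R F N) := by
  simp only [← LinearMap.ker_eq_bot, LinearMap.ker_eq_bot']
  constructor
  · intro hT m hm
    set v := G.symm (0, m) with hv
    have hGv : (T v.1 + ι v.2, p v.1) = (0, m) := by rw [← hG, hv, G.apply_symm_apply]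
    have hv₂ : v.2 = 0 := hm
    rw [hv₂, map_zero, add_zero, Prod.mk.injEq] at hGv
    rw [← hGv.2, hT _ hGv.1, map_zero]
  · intro hs x hx
    have hGx : G (x, 0) = (0, p x) := by simp [hG, hx]
    have hpx : p x = 0 := hs _ (by simp [G.symm_apply_eq.mpr hGx.symm])
    simpa using G.injective (hGx.trans (by simp [hpx]) : G (x, 0) = G 0)

theorem surjective_iff_surjective_of_bordered (G : (E × Y) ≃ₗ[R] (F × N))
    (hG : ∀ v, G v = (T v.1 + ι v.2, p v.1)) :
    Surjective T ↔
      Surjective (LinearMap.snd R E Y ∘ₗ G.symm.toLinearMap ∘ₗ LinearMap.inr R F N) := by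
  constructor
  · intro hT y
    obtain ⟨x, hx⟩ := hT (-ι y)
    have hGxy : G (x, y) = (0, p x) := by simp [hG, hx]
    exact ⟨p x, by simp [G.symm_apply_eq.mpr hGxy.symm]⟩
  · intro hs t
    obtain ⟨m, hm⟩ := hs (G.symm (t, 0)).2
    set v := G.symm (t, -m) with hv
    have hv₂ : v.2 = 0 := by
      have hsplit : ((t, -m) : F × N) = (t, 0) - (0, m) := by simp
      rw [hv, hsplit, map_sub, Prod.snd_sub, sub_eq_zero]
      exact hm.symm
    have hGv : (T v.1 + ι v.2, p v.1) = (t, -m) := by rw [← hG, hv, G.apply_symm_apply]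
    rw [hv₂, map_zero, add_zero, Prod.mk.injEq] at hGv
    exact ⟨v.1, hGv.1⟩

theorem bijective_iff_bijective_of_bordered (G : (E × Y) ≃ₗ[R] (F × N))
    (hG : ∀ v, G v = (T v.1 + ι v.2, p v.1)) :
    Bijective T ↔
      Bijective (LinearMap.snd R E Y ∘ₗ G.symm.toLinearMap ∘ₗ LinearMap.inr R F N) :=
  and_congr (injective_iff_injective_of_bordered G hG) (surjective_iff_surjective_of_bordered G hG)

end Schur

section Bordered

variable {𝕜 : Type*} [NontriviallyNormedField 𝕜]
  {E F N Y : Type*} [NormedAddCommGroup E] [NormedSpace 𝕜 E] [NormedAddCommGroup F]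
  [NormedSpace 𝕜 F] [NormedAddCommGroup N] [NormedSpace 𝕜 N] [NormedAddCommGroup Y]
  [NormedSpace 𝕜 Y]

namespace ContinuousLinearMap

def bordered (T : E →L[𝕜] F) (p : E →L[𝕜] N) (ι : Y →L[𝕜] F) : E × Y →L[𝕜] F × N :=
  (T.coprod ι).prod (p.coprod 0)

@[simp]
theorem bordered_apply (T : E →L[𝕜] F) (p : E →L[𝕜] N) (ι : Y →L[𝕜] F) (v : E × Y) :
    T.bordered p ι v = (T v.1 + ι v.2, p v.1) := by
  simp [bordered]

theorem bijective_bordered {T : E →L[𝕜] F} {p : E →L[𝕜] LinearMap.ker (T : E →ₗ[𝕜] F)}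
    (hp : ∀ x : LinearMap.ker (T : E →ₗ[𝕜] F), p x = x) {Y : Submodule 𝕜 F}
    (hY : IsCompl (LinearMap.range (T : E →ₗ[𝕜] F)) Y) : Bijective (T.bordered p Y.subtypeL) := by
  constructor
  · refine (injective_iff_map_eq_zero _).mpr fun ⟨x, y⟩ hxy => ?_
    simp only [bordered_apply, Prod.mk_eq_zero] at hxy
    have hy : (y : F) = 0 := by
      refine Submodule.disjoint_def.mp hY.disjoint _ ⟨-x, ?_⟩ y.2
      simpa using (eq_neg_of_add_eq_zero_right hxy.1).symm
    have hx : x ∈ LinearMap.ker (T : E →ₗ[𝕜] F) := by simpa [hy] using hxy.1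
    rw [Prod.mk_eq_zero, ← Submodule.coe_eq_zero (x := y), hy]
    simpa [hxy.2] using (hp ⟨x, hx⟩).symm
  · rintro ⟨h, n⟩
    have hh : h ∈ LinearMap.range (T : E →ₗ[𝕜] F) ⊔ Y := by rw [hY.sup_eq_top]; trivial
    obtain ⟨_, ⟨x, rfl⟩, y, hy, rfl⟩ := Submodule.mem_sup.mp hh
    refine ⟨(x - p x + n, ⟨y, hy⟩), ?_⟩
    simp [hp]

end ContinuousLinearMap

theorem AnalyticAt.clm_comp_comp {G H K : Type*} [NormedAddCommGroup G] [NormedSpace 𝕜 G]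
    [NormedAddCommGroup H] [NormedSpace 𝕜 H] [NormedAddCommGroup K] [NormedSpace 𝕜 K]
    {f : K → E →L[𝕜] F} {z : K} (hf : AnalyticAt 𝕜 f z) (A : F →L[𝕜] G) (B : H →L[𝕜] E) :
    AnalyticAt 𝕜 (fun w => A ∘L f w ∘L B) z :=
  ((ContinuousLinearMap.compL 𝕜 H F G A).analyticAt _).comp
    ((((ContinuousLinearMap.compL 𝕜 H E F).flip B).analyticAt _).comp hf)

theorem AnalyticAt.bordered {K : Type*} [NormedAddCommGroup K] [NormedSpace 𝕜 K]
    {f : K → E →L[𝕜] F} {z : K} (hf : AnalyticAt 𝕜 f z) (p : E →L[𝕜] N) (ι : Y →L[𝕜] F) :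
    AnalyticAt 𝕜 (fun w => (f w).bordered p ι) z := by
  have hsplit : ∀ w, (f w).bordered p ι =
      .inl 𝕜 F N ∘L f w ∘L .fst 𝕜 E Y + (0 : E →L[𝕜] F).bordered p ι := fun w => by
    ext v <;> simp
  simp only [hsplit]
  exact (hf.clm_comp_comp _ _).add analyticAt_const

theorem AnalyticAt.inverse [CompleteSpace E] {K : Type*} [NormedAddCommGroup K] [NormedSpace 𝕜 K]
    {f : K → E →L[𝕜] F} {z : K} (hf : AnalyticAt 𝕜 f z)
    (hfz : (f z).IsInvertible) : AnalyticAt 𝕜 (fun w => (f w).inverse) z :=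
  (hfz.contDiffAt_map_inverse (n := ω)).analyticAt.comp hf

theorem AnalyticAt.det [CompleteSpace 𝕜] [FiniteDimensional 𝕜 E] {K : Type*}
    [NormedAddCommGroup K] [NormedSpace 𝕜 K] {f : K → E →L[𝕜] E} {z : K} (hf : AnalyticAt 𝕜 f z) :
    AnalyticAt 𝕜 (fun w => (f w).det) z := by
  let b := Module.finBasis 𝕜 E
  have hdet : ∀ w, (f w).det = ∑ σ : Equiv.Perm (Fin (Module.finrank 𝕜 E)),
      (Equiv.Perm.sign σ : ℤ) * ∏ i, b.coord (σ i) (f w (b i)) := fun w => by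
    rw [ContinuousLinearMap.det, ← LinearMap.det_toMatrix b, Matrix.det_apply']
    simp [LinearMap.toMatrix_apply]
  simp only [hdet]
  refine Finset.analyticAt_fun_sum _ fun σ _ => analyticAt_const.mul
    (Finset.analyticAt_fun_prod _ fun i _ => ?_)
  exact (((b.coord (σ i)).toContinuousLinearMap ∘L
    ContinuousLinearMap.apply 𝕜 E (b i)).analyticAt _).comp hf

theorem ContinuousLinearMap.bijective_iff_det_ne_zero [FiniteDimensional 𝕜 E] (A : E →L[𝕜] E) :
    Bijective A ↔ A.det ≠ 0 := by
  rw [← isUnit_iff_ne_zero, ContinuousLinearMap.det, ← LinearMap.isUnit_iff_isUnit_det,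
    Module.End.isUnit_iff]
  rfl

theorem AnalyticAt.eventually_not_bijective_or_eventually_bijective_of_finiteDimensional
    [CompleteSpace 𝕜] [FiniteDimensional 𝕜 E] [FiniteDimensional 𝕜 F] {f : 𝕜 → E →L[𝕜] F}
    {z : 𝕜} (hf : AnalyticAt 𝕜 f z) :
    (∀ᶠ w in 𝓝 z, ¬ Bijective (f w)) ∨ ∀ᶠ w in 𝓝[≠] z, Bijective (f w) := by
  by_cases hdim : Module.finrank 𝕜 E = Module.finrank 𝕜 F
  · let e : F ≃L[𝕜] E := ContinuousLinearEquiv.ofFinrankEq hdim.symm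
    have hbij : ∀ w, Bijective (f w) ↔ ((e : F →L[𝕜] E) ∘L f w).det ≠ 0 := fun w => by
      rw [← ContinuousLinearMap.bijective_iff_det_ne_zero, ContinuousLinearMap.coe_comp,
        ContinuousLinearEquiv.coe_coe, e.bijective.of_comp_iff']
    simp only [hbij, not_not]
    exact (hf.clm_comp_comp (e : F →L[𝕜] E) (.id 𝕜 E)).det
      |>.eventually_eq_zero_or_eventually_ne_zero
  · exact .inl <| .of_forall fun w hw =>
      hdim (LinearEquiv.ofBijective (f w : E →ₗ[𝕜] F) hw).finrank_eq

theorem AnalyticAt.eventually_not_bijective_or_eventually_bijective [CompleteSpace 𝕜]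
    [IsRCLikeNormedField 𝕜] [CompleteSpace E] [CompleteSpace F] {f : 𝕜 → E →L[𝕜] F} {z : 𝕜}
    (hf : AnalyticAt 𝕜 f z)
    [FiniteDimensional 𝕜 (LinearMap.ker (f z : E →ₗ[𝕜] F))]
    [FiniteDimensional 𝕜 (F ⧸ LinearMap.range (f z : E →ₗ[𝕜] F))] :
    (∀ᶠ w in 𝓝 z, ¬ Bijective (f w)) ∨ ∀ᶠ w in 𝓝[≠] z, Bijective (f w) := by
  obtain ⟨Y, hY⟩ := Submodule.exists_isCompl (LinearMap.range (f z : E →ₗ[𝕜] F))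
  have : FiniteDimensional 𝕜 Y := (Submodule.quotientEquivOfIsCompl _ Y hY).finiteDimensional
  have : CompleteSpace Y := FiniteDimensional.complete 𝕜 Y
  have : CompleteSpace (LinearMap.ker (f z : E →ₗ[𝕜] F)) := FiniteDimensional.complete 𝕜 _
  obtain ⟨p, hp⟩ := Submodule.ClosedComplemented.of_finiteDimensional
    (LinearMap.ker (f z : E →ₗ[𝕜] F))
  set G := fun w => (f w).bordered p Y.subtypeL
  have hG : AnalyticAt 𝕜 G z := hf.bordered p Y.subtypeL
  have hGz : (G z).IsInvertible := by
    have hbij := ContinuousLinearMap.bijective_bordered hp hY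
    exact ⟨.ofBijective (G z) (LinearMap.ker_eq_bot_of_injective hbij.1)
      (LinearMap.range_eq_top_of_surjective _ hbij.2), rfl⟩
  set s := fun w => .snd 𝕜 E Y ∘L (G w).inverse ∘L .inr 𝕜 F _
  have hs : AnalyticAt 𝕜 s z := (hG.inverse hGz).clm_comp_comp _ _
  have hschur : ∀ᶠ w in 𝓝 z, Bijective (f w) ↔ Bijective (s w) := by
    filter_upwards [hG.continuousAt.eventually_mem (ContinuousLinearEquiv.isOpen.mem_nhds hGz)]
    rintro w ⟨M, hM⟩
    have hMG : ∀ v, M.toLinearEquiv v = ((f w : E →ₗ[𝕜] F) v.1 + Y.subtype v.2, p v.1) :=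
      fun v => by
        change M.toContinuousLinearMap v = _
        simp [hM, G]
    have hinv : (G w).inverse = M.symm := by rw [← hM, ContinuousLinearMap.inverse_equiv]
    simp only [s, hinv]
    exact bijective_iff_bijective_of_bordered M.toLinearEquiv hMG
  rcases hs.eventually_not_bijective_or_eventually_bijective_of_finiteDimensional with h | h
  · exact .inl <| (hschur.and h).mono fun w hw => hw.1.not.mpr hw.2
  · exact .inr <| ((hschur.filter_mono nhdsWithin_le_nhds).and h).mono fun w hw => hw.1.mpr hw.2

end Bordered

theorem IsPreconnected.eventually_nhdsNE_of_dichotomy {X : Type*} [TopologicalSpace X] [T1Space X]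
    [∀ x : X, (𝓝[≠] x).NeBot] {U : Set X} (hU : IsPreconnected U) {P : X → Prop}
    (hP : ∀ x ∈ U, (∀ᶠ y in 𝓝 x, ¬ P y) ∨ ∀ᶠ y in 𝓝[≠] x, P y) {x₀ : X} (hx₀ : x₀ ∈ U)
    (hPx₀ : P x₀) : ∀ x ∈ U, ∀ᶠ y in 𝓝[≠] x, P y := by
  have hdisj : Disjoint {x | ∀ᶠ y in 𝓝[≠] x, P y} {x | ∀ᶠ y in 𝓝 x, ¬ P y} :=
    Set.disjoint_left.mpr fun x (hyes : ∀ᶠ y in 𝓝[≠] x, P y) (hno : ∀ᶠ y in 𝓝 x, ¬ P y) =>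
      let ⟨_, hy, hny⟩ := (hyes.and (nhdsWithin_le_nhds hno)).exists
      hny hy
  refine hU.subset_left_of_subset_union isOpen_setOfPred_eventually_nhdsWithin
    isOpen_setOfPred_eventually_nhds hdisj (fun x hx => (hP x hx).symm) ⟨x₀, hx₀, ?_⟩
  exact (hP x₀ hx₀).resolve_left fun h => h.self_of_nhds hPx₀

theorem analytic_fredholm_family_noninvertible_set_discrete_general
    {H₁ H₂ : Type*} [NormedAddCommGroup H₁] [NormedSpace ℂ H₁] [CompleteSpace H₁]
    [NormedAddCommGroup H₂] [NormedSpace ℂ H₂] [CompleteSpace H₂]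
    {U : Set ℂ} (hUconn : IsConnected U)
    (f : ℂ → H₁ →L[ℂ] H₂) (hf : AnalyticOnNhd ℂ f U)
    (hFred : ∀ z ∈ U, FiniteDimensional ℂ (LinearMap.ker (f z : H₁ →ₗ[ℂ] H₂)) ∧
      IsClosed (LinearMap.range (f z : H₁ →ₗ[ℂ] H₂) : Set H₂) ∧
      FiniteDimensional ℂ (H₂ ⧸ LinearMap.range (f z : H₁ →ₗ[ℂ] H₂)))
    (z₀ : ℂ) (hz₀ : z₀ ∈ U) (hbij : Function.Bijective (f z₀)) :
    ∀ z ∈ U, ¬ AccPt z (Filter.principal {w ∈ U | ¬ Function.Bijective (f w)}) := by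
  have hlocal : ∀ z ∈ U,
      (∀ᶠ w in 𝓝 z, ¬ Bijective (f w)) ∨ ∀ᶠ w in 𝓝[≠] z, Bijective (f w) := by
    intro z hz
    have := (hFred z hz).1
    have := (hFred z hz).2.2
    exact (hf z hz).eventually_not_bijective_or_eventually_bijective
  have hgeneric := hUconn.isPreconnected.eventually_nhdsNE_of_dichotomy hlocal hz₀ hbij
  intro z hz hacc
  obtain ⟨w, hw, hbijw⟩ :=
    ((accPt_iff_frequently_nhdsNE.mp hacc).and_eventually (hgeneric z hz)).exists
  exact hw.2 hbijw

/-- Analytic Fredholm theorem: if `f` is an analytic family of Fredholm operators between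
complex Banach spaces on an open connected set `U ⊆ ℂ`, and `f z₀` is bijective for some
`z₀ ∈ U`, then the set of points of `U` where `f` fails to be bijective has no accumulation
point in `U`. -/
theorem analytic_fredholm_family_noninvertible_set_discrete
    {H₁ H₂ : Type*} [NormedAddCommGroup H₁] [NormedSpace ℂ H₁] [CompleteSpace H₁]
    [NormedAddCommGroup H₂] [NormedSpace ℂ H₂] [CompleteSpace H₂]
    {U : Set ℂ} (hU : IsOpen U) (hUconn : IsConnected U)
    (f : ℂ → H₁ →L[ℂ] H₂) (hf : AnalyticOnNhd ℂ f U)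
    (hFred : ∀ z ∈ U, FiniteDimensional ℂ (LinearMap.ker (f z : H₁ →ₗ[ℂ] H₂)) ∧
      IsClosed (LinearMap.range (f z : H₁ →ₗ[ℂ] H₂) : Set H₂) ∧
      FiniteDimensional ℂ (H₂ ⧸ LinearMap.range (f z : H₁ →ₗ[ℂ] H₂)))
    (z₀ : ℂ) (hz₀ : z₀ ∈ U) (hbij : Function.Bijective (f z₀)) :
    ∀ z ∈ U, ¬ AccPt z (Filter.principal {w ∈ U | ¬ Function.Bijective (f w)}) :=
  analytic_fredholm_family_noninvertible_set_discrete_general hUconn f hf hFred z₀ hz₀ hbij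
end

section
/- Let H₁ and H₂ be complex Hilbert spaces and h : ℝ → B(H₁,H₂) a map, continuous with respect to the operator norm, such that h(τ) is Fredholm of index 0 for every τ ∈ ℝ and h(τ) is bijective for all τ outside a finite set F ⊂ ℝ. Then there exists a compactly supported, operator-norm continuous map f : ℝ → B(H₁,H₂) such that f(τ) has finite rank for every τ and h(τ) − f(τ) is bijective for every τ ∈ ℝ. -/
/-!
At an exceptional point `p`, the index-`0` Fredholm operator `h p` becomes invertible after
subtracting a finite-rank `S` mapping `ker (h p)` isomorphically onto `(range (h p))ᗮ`, and
`h τ - S` stays invertible for `τ` near `p`. Where `h τ` is invertible, `h τ - z • S` fails to be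
invertible for only finitely many `z : ℂ` (they are inverse eigenvalues of a finite-rank
operator), so a path from `1` to `0` in `ℂ` avoids them, and by compactness of the path it does
so uniformly for nearby `τ`. Running `z` along this path as `τ` leaves a small window around `p`
gives a compactly supported correction `ψ τ • S`; the windows of distinct exceptional points are
disjoint, so the local corrections add up.
-/

open Function LinearMap Metric Topology

section FiniteRankPerturbation

variable {K V W : Type*} [Field K] [AddCommGroup V] [Module K V] [AddCommGroup W] [Module K W]

theorem Module.End.surjective_of_injective_of_finiteDimensional_range_sub_one
    {T : Module.End K V} (hT : FiniteDimensional K (range (T - 1)))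
    (hinj : Function.Injective T) : Function.Surjective T := by
  set U := range (T - 1)
  have hTU : ∀ u ∈ U, T u ∈ U := fun u hu => by
    simpa using add_mem hu (mem_range_self (T - 1) u)
  have hsurjU : Function.Surjective (T.restrict hTU) :=
    injective_iff_surjective.mp fun a b hab => Subtype.ext (hinj congr($hab.1))
  intro y
  obtain ⟨w, hw⟩ := hsurjU ⟨(T - 1) y, mem_range_self _ y⟩
  refine ⟨y - w, ?_⟩
  have hTw : T w = T y - y := by simpa using congr($hw.1)
  rw [map_sub, hTw, sub_sub_cancel]

theorem Module.End.finite_setOf_not_bijective_one_sub_smul (A : Module.End K V)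
    [FiniteDimensional K (range A)] :
    {z : K | ¬ Function.Bijective (1 - z • A : Module.End K V)}.Finite := by
  have hA : ∀ x ∈ range A, A x ∈ range A := fun x _ => mem_range_self A x
  refine ((Module.End.finite_hasEigenvalue (A.restrict hA)).image (·⁻¹)).subset fun z hz => ?_
  have hrange : range ((1 - z • A) - 1) ≤ range A := by
    rw [sub_sub_cancel_left, range_neg]; exact range_smul_le_range A z
  have hninj : ¬ Function.Injective (1 - z • A : Module.End K V) := fun hinj =>
    hz ⟨hinj, Module.End.surjective_of_injective_of_finiteDimensional_range_sub_one
      (Submodule.finiteDimensional_of_le hrange) hinj⟩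
  obtain ⟨x, hx, hx0⟩ : ∃ x, (1 - z • A) x = 0 ∧ x ≠ 0 := by
    simpa [injective_iff_map_eq_zero] using hninj
  have hxA : x = z • A x := by simpa [sub_eq_zero] using hx
  have hz0 : z ≠ 0 := by rintro rfl; exact hx0 (by simpa using hxA)
  refine ⟨z⁻¹, Module.End.hasEigenvalue_of_hasEigenvector (x := ⟨x, ?_⟩) ⟨?_, ?_⟩, inv_inv z⟩
  · exact ⟨z • x, by rw [map_smul, ← hxA]⟩
  · rw [Module.End.mem_eigenspace_iff]
    ext
    simp [eq_inv_smul_iff₀ hz0, ← hxA]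
  · exact fun h => hx0 congr($h.1)

theorem LinearMap.finite_setOf_not_bijective_sub_smul {T S : V →ₗ[K] W} (hT : Bijective T)
    [FiniteDimensional K (range S)] : {z : K | ¬ Bijective (T - z • S)}.Finite := by
  set e := LinearEquiv.ofBijective T hT
  have : FiniteDimensional K (range (e.symm.toLinearMap ∘ₗ S)) := by
    rw [range_comp]; infer_instance
  refine (Module.End.finite_setOf_not_bijective_one_sub_smul (e.symm.toLinearMap ∘ₗ S)).subset
    fun z hz => ?_
  have : ⇑(T - z • S) = e ∘ (1 - z • e.symm.toLinearMap ∘ₗ S : Module.End K V) := by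
    ext x; simp; rfl
  simpa [this, e.bijective.of_comp_iff'] using hz

end FiniteRankPerturbation

theorem LinearMap.bijective_sub_of_isCompl_range {R M N : Type*} [Ring R] [AddCommGroup M]
    [Module R M] [AddCommGroup N] [Module R N] (T : M →ₗ[R] N) {C : Submodule R N}
    (hC : IsCompl (range T) C) (P : M →ₗ[R] ker T) (hP : ∀ k : ker T, P k = k)
    (u : ker T ≃ₗ[R] C) : Bijective (T - C.subtype ∘ₗ u.toLinearMap ∘ₗ P) := by
  have hPP : ∀ x, P (P x) = P x := fun x => hP (P x)
  refine ⟨(injective_iff_map_eq_zero _).mpr fun x hx => ?_, fun y => ?_⟩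
  · have hTx : T x = u (P x) := sub_eq_zero.mp hx
    have hTx0 : T x = 0 :=
      Submodule.disjoint_def.mp hC.disjoint _ (mem_range_self T x) (hTx ▸ (u (P x)).2)
    have hPx : P x = 0 := u.map_eq_zero_iff.mp (Subtype.ext (hTx.symm.trans hTx0))
    simpa [hPx] using (congr($(hP ⟨x, hTx0⟩).1)).symm
  · obtain ⟨_, ⟨x, rfl⟩, c, hc, rfl⟩ :=
      Submodule.mem_sup.mp (hC.sup_eq_top ▸ Submodule.mem_top (x := y))
    refine ⟨x - P x - u.symm ⟨c, hc⟩, ?_⟩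
    simp [hPP, hP]

namespace ContinuousLinearMap

variable (𝕜 E F : Type*) [NontriviallyNormedField 𝕜] [NormedAddCommGroup E] [NormedSpace 𝕜 E]
  [NormedAddCommGroup F] [NormedSpace 𝕜 F]

def finiteRank : Submodule 𝕜 (E →L[𝕜] F) where
  carrier := {S | FiniteDimensional 𝕜 (range (S : E →ₗ[𝕜] F))}
  zero_mem' := by
    change FiniteDimensional 𝕜 (range (0 : E →ₗ[𝕜] F))
    rw [range_zero]
    infer_instance
  add_mem' {S T} (hS : FiniteDimensional _ _) (hT : FiniteDimensional _ _) :=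
    Submodule.finiteDimensional_of_le (range_add_le (S : E →ₗ[𝕜] F) T)
  smul_mem' c S (hS : FiniteDimensional _ _) :=
    Submodule.finiteDimensional_of_le (range_smul_le_range (S : E →ₗ[𝕜] F) c)

variable {𝕜 E F}

theorem mem_finiteRank {S : E →L[𝕜] F} :
    S ∈ finiteRank 𝕜 E F ↔ FiniteDimensional 𝕜 (range (S : E →ₗ[𝕜] F)) := Iff.rfl

theorem isOpen_setOf_bijective [CompleteSpace E] [CompleteSpace F] :
    IsOpen {T : E →L[𝕜] F | Bijective T} := by
  convert ContinuousLinearEquiv.isOpen (𝕜 := 𝕜) (E := E) (F := F)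
  ext T
  refine ⟨fun hT => ⟨.ofBijective _ (ker_eq_bot.mpr hT.1) (range_eq_top.mpr hT.2), rfl⟩, ?_⟩
  rintro ⟨e, rfl⟩
  exact e.bijective

end ContinuousLinearMap

open ContinuousLinearMap

theorem ContinuousLinearMap.exists_mem_finiteRank_sub_bijective {𝕜 E F : Type*} [RCLike 𝕜]
    [NormedAddCommGroup E] [InnerProductSpace 𝕜 E]
    [NormedAddCommGroup F] [InnerProductSpace 𝕜 F] [CompleteSpace F] (T : E →L[𝕜] F)
    (hker : FiniteDimensional 𝕜 (ker (T : E →ₗ[𝕜] F)))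
    (hclosed : IsClosed (range (T : E →ₗ[𝕜] F) : Set F))
    (hcoker : FiniteDimensional 𝕜 (F ⧸ range (T : E →ₗ[𝕜] F)))
    (hind : (Module.finrank 𝕜 (ker (T : E →ₗ[𝕜] F)) : ℤ) =
      Module.finrank 𝕜 (F ⧸ range (T : E →ₗ[𝕜] F))) :
    ∃ S ∈ finiteRank 𝕜 E F, Bijective (T - S) := by
  set K := ker (T : E →ₗ[𝕜] F)
  set R := range (T : E →ₗ[𝕜] F)
  have : CompleteSpace R := hclosed.completeSpace_coe
  have hRc : IsCompl R Rᗮ := R.isCompl_orthogonal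
  have hfin : FiniteDimensional 𝕜 Rᗮ := (R.quotientEquivOfIsCompl Rᗮ hRc).finiteDimensional
  have hdim : Module.finrank 𝕜 K = Module.finrank 𝕜 Rᗮ := by
    rw [← (R.quotientEquivOfIsCompl Rᗮ hRc).finrank_eq]; exact_mod_cast hind
  obtain ⟨u⟩ := FiniteDimensional.nonempty_linearEquiv_of_finrank_eq hdim
  refine ⟨Rᗮ.subtypeL.comp
      (u.toLinearMap.toContinuousLinearMap.comp K.orthogonalProjectionOnto),
    Submodule.finiteDimensional_of_le (by rintro _ ⟨x, rfl⟩; exact (u _).2), ?_⟩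
  exact (T : E →ₗ[𝕜] F).bijective_sub_of_isCompl_range hRc _
    (fun k => K.orthogonalProjectionOnto_mem_subspace_eq_self k) u

theorem IsOpen.exists_continuous_mem_of_countable_slices {E : Type*} [AddCommGroup E]
    [Module ℝ E] [TopologicalSpace E] [ContinuousAdd E] [ContinuousSMul ℝ E]
    (hE : 1 < Module.rank ℝ E) {G : Set (ℝ × E)} (hG : IsOpen G) {r : ℝ} (hr : 0 < r)
    {z₀ z₁ : E} (h₁ : (0, z₁) ∈ G) (h₀ : ∀ s ∈ Set.Ioc 0 r, (s, z₀) ∈ G)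
    (hcount : ∀ s ∈ Set.Ioc 0 r, {z | (s, z) ∉ G}.Countable) :
    ∃ φ : ℝ → E, Continuous φ ∧ (∀ s, r ≤ s → φ s = z₀) ∧
      ∀ s ∈ Set.Icc 0 r, (s, φ s) ∈ G := by
  obtain ⟨δ, hδ, hδG⟩ := Metric.eventually_nhds_iff.mp <|
    (continuous_id.prodMk continuous_const).tendsto' (0 : ℝ) (0, z₁) rfl |>.eventually
      (hG.mem_nhds h₁)
  set ε := min (δ / 2) (r / 2)
  have hε : 0 < ε := by positivity
  have hεδ : ε < δ := by linarith [min_le_left (δ / 2) (r / 2)]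
  have hεr : ε < r := by linarith [min_le_right (δ / 2) (r / 2)]
  have hεz₁ : (ε, z₁) ∈ G := hδG (by rwa [Real.dist_eq, sub_zero, abs_of_pos hε])
  obtain ⟨γ, hγ⟩ := ((hcount ε ⟨hε, hεr.le⟩).isPathConnected_compl_of_one_lt_rank hE).joinedIn
    z₁ (by simpa using hεz₁) z₀ (by simpa using h₀ ε ⟨hε, hεr.le⟩)
  obtain ⟨η, hη, hηG⟩ := Metric.eventually_nhds_iff.mp <|
    (isCompact_range γ.continuous).eventually_forall_of_forall_eventually (x₀ := ε)
      (P := fun s z => (s, z) ∈ G)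
      (by rintro _ ⟨t, rfl⟩; exact hG.mem_nhds (by simpa using hγ t))
  -- `φ` is `z₁` on `[0, ε]`, runs along `γ` on `[ε, ε + η']` and is `z₀` afterwards.
  set η' := min (η / 2) (r - ε)
  have hη' : 0 < η' := lt_min (by positivity) (by linarith)
  have hη'η : η' < η := by linarith [min_le_left (η / 2) (r - ε)]
  have hη'r : ε + η' ≤ r := by linarith [min_le_right (η / 2) (r - ε)]
  refine ⟨fun s => γ.extend ((s - ε) / η'), γ.continuous_extend.comp (by fun_prop),
    fun s hs => γ.extend_of_one_le ((one_le_div hη').mpr (by linarith)), fun s hs => ?_⟩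
  change (s, γ.extend ((s - ε) / η')) ∈ G
  rcases le_or_gt s ε with hsε | hsε
  · rw [γ.extend_of_le_zero (div_nonpos_of_nonpos_of_nonneg (by linarith) hη'.le)]
    exact hδG (by rw [Real.dist_eq, sub_zero, abs_of_nonneg hs.1]; linarith)
  rcases le_or_gt s (ε + η') with hsη | hsη
  · exact hηG (by rw [Real.dist_eq, abs_of_pos (by linarith)]; linarith) _
      (γ.extend_range ▸ Set.mem_range_self _)
  · rw [γ.extend_of_one_le ((one_le_div hη').mpr (by linarith))]
    exact h₀ s ⟨by linarith, hs.2⟩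

theorem Set.Finite.exists_pos_pairwiseDisjoint_closedBall {α : Type*} [MetricSpace α]
    {s : Set α} (hs : s.Finite) : ∃ r > 0, s.PairwiseDisjoint (closedBall · r) := by
  have hsep : ∀ p ∈ s, ∀ q ∈ s, ∀ᶠ r in 𝓝[>] (0 : ℝ), p ≠ q → r + r < dist p q := by
    intro p _ q _
    by_cases hpq : p = q
    · exact .of_forall fun _ h => absurd hpq h
    refine nhdsWithin_le_nhds (Filter.Eventually.mono ?_ fun _ h _ => h)
    exact (continuous_id.add continuous_id).continuousAt.eventually_lt continuousAt_const
      (by simpa using dist_pos.mpr hpq)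
  obtain ⟨r, hsep, hr⟩ := ((Filter.eventually_all_finite hs).mpr fun p hp =>
    (Filter.eventually_all_finite hs).mpr (hsep p hp)).and self_mem_nhdsWithin |>.exists
  exact ⟨r, hr, fun p hp q hq hpq => closedBall_disjoint_closedBall (hsep p hp q hq hpq)⟩

theorem exists_continuous_finiteRank_correction_near {E F : Type*}
    [NormedAddCommGroup E] [NormedSpace ℂ E] [CompleteSpace E]
    [NormedAddCommGroup F] [NormedSpace ℂ F] [CompleteSpace F]
    {h : ℝ → E →L[ℂ] F} (hcont : Continuous h) {p r : ℝ} (hr : 0 < r) {S : E →L[ℂ] F}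
    (hS : S ∈ finiteRank ℂ E F) (hpS : Bijective (h p - S))
    (hbij : ∀ τ ∈ closedBall p r \ {p}, Bijective (h τ)) :
    ∃ g : ℝ → E →L[ℂ] F, Continuous g ∧ (∀ τ, g τ ∈ finiteRank ℂ E F) ∧
      (∀ τ ∉ closedBall p r, g τ = 0) ∧ ∀ τ ∈ closedBall p r, Bijective (h τ - g τ) := by
  have := mem_finiteRank.mp hS
  -- Parametrising by the distance `s = |τ - p|` treats both sides of `p` at once.
  set G : Set (ℝ × ℂ) :=
    {q | Bijective (h (p + q.1) - q.2 • S) ∧ Bijective (h (p - q.1) - q.2 • S)}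
  have hG : IsOpen G := (isOpen_setOf_bijective.preimage (by fun_prop)).inter
    (isOpen_setOf_bijective.preimage (by fun_prop))
  have hshift : ∀ s ∈ Set.Ioc 0 r, Bijective (h (p + s)) ∧ Bijective (h (p - s)) := by
    intro s ⟨hs0, hsr⟩
    refine ⟨hbij _ ⟨?_, ?_⟩, hbij _ ⟨?_, ?_⟩⟩ <;> simp [abs_of_pos hs0, hsr, hs0.ne']
  obtain ⟨φ, hφc, hφr, hφG⟩ := hG.exists_continuous_mem_of_countable_slices
    (by rw [Complex.rank_real_complex]; norm_num) hr (z₁ := 1) (z₀ := 0)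
    (by simpa [G] using hpS) (fun s hs => by simpa [G] using hshift s hs) fun s hs =>
      (((LinearMap.finite_setOf_not_bijective_sub_smul (hshift s hs).1).union
        (LinearMap.finite_setOf_not_bijective_sub_smul (hshift s hs).2)).subset
          fun z hz => not_and_or.mp hz).countable
  refine ⟨fun τ => φ |τ - p| • S, by fun_prop, fun τ => Submodule.smul_mem _ _ hS,
    fun τ hτ => ?_, fun τ hτ => ?_⟩
  · beta_reduce
    rw [hφr _ (by simpa [Real.dist_eq] using (not_le.mp hτ).le), zero_smul]
  · obtain ⟨hplus, hminus⟩ := hφG |τ - p| ⟨abs_nonneg _, by simpa [Real.dist_eq] using hτ⟩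
    rcases le_total p τ with hpτ | hτp
    · simpa [abs_of_nonneg (sub_nonneg.mpr hpτ)] using hplus
    · simpa [abs_of_nonpos (sub_nonpos.mpr hτp)] using hminus

/-- A norm-continuous family of Fredholm operators of index `0` on the real line, bijective
outside a finite set, can be corrected by a compactly supported, norm-continuous family of
finite-rank operators so as to become bijective everywhere. -/
theorem fredholm_family_finite_rank_correction_on_line
    {H₁ H₂ : Type*}
    [NormedAddCommGroup H₁] [InnerProductSpace ℂ H₁] [CompleteSpace H₁]
    [NormedAddCommGroup H₂] [InnerProductSpace ℂ H₂] [CompleteSpace H₂]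
    (h : ℝ → H₁ →L[ℂ] H₂) (hcont : Continuous h)
    (hker : ∀ τ : ℝ, FiniteDimensional ℂ (LinearMap.ker (h τ : H₁ →ₗ[ℂ] H₂)))
    (hclosed : ∀ τ : ℝ, IsClosed (LinearMap.range (h τ : H₁ →ₗ[ℂ] H₂) : Set H₂))
    (hcoker : ∀ τ : ℝ, FiniteDimensional ℂ (H₂ ⧸ LinearMap.range (h τ : H₁ →ₗ[ℂ] H₂)))
    (hind : ∀ τ : ℝ, (Module.finrank ℂ (LinearMap.ker (h τ : H₁ →ₗ[ℂ] H₂)) : ℤ) =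
      Module.finrank ℂ (H₂ ⧸ LinearMap.range (h τ : H₁ →ₗ[ℂ] H₂)))
    (F : Set ℝ) (hF : F.Finite)
    (hbij : ∀ τ : ℝ, τ ∉ F → Function.Bijective (h τ)) :
    ∃ f : ℝ → H₁ →L[ℂ] H₂, Continuous f ∧ HasCompactSupport f ∧
      (∀ τ : ℝ, FiniteDimensional ℂ (LinearMap.range (f τ : H₁ →ₗ[ℂ] H₂))) ∧
      ∀ τ : ℝ, Function.Bijective (h τ - f τ) := by
  lift F to Finset ℝ using hF
  obtain ⟨r, hr, hdisj⟩ := F.finite_toSet.exists_pos_pairwiseDisjoint_closedBall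
  have hloc : ∀ p ∈ F, ∃ g : ℝ → H₁ →L[ℂ] H₂, Continuous g ∧
      (∀ τ, g τ ∈ finiteRank ℂ H₁ H₂) ∧ (∀ τ ∉ closedBall p r, g τ = 0) ∧
      ∀ τ ∈ closedBall p r, Bijective (h τ - g τ) := fun p hp => by
    obtain ⟨S, hS, hpS⟩ :=
      (h p).exists_mem_finiteRank_sub_bijective (hker p) (hclosed p) (hcoker p) (hind p)
    exact exists_continuous_finiteRank_correction_near hcont hr hS hpS fun τ hτ =>
      hbij τ fun hτF => hτ.2 (hdisj.elim_set hτF hp τ (mem_closedBall_self hr.le) hτ.1)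
  choose! g hgc hgS hg0 hgb using hloc
  refine ⟨fun τ => ∑ p ∈ F, g p τ, continuous_finsetSum _ hgc,
    .intro (F.finite_toSet.isCompact_biUnion fun p _ => isCompact_closedBall p r) fun τ hτ =>
      F.sum_eq_zero fun p hp => hg0 p hp τ fun hτp => hτ (Set.mem_biUnion hp hτp),
    fun τ => mem_finiteRank.mp (Submodule.sum_mem _ fun p hp => hgS p hp τ), fun τ => ?_⟩
  beta_reduce
  by_cases hτ : ∃ p ∈ F, τ ∈ closedBall p r
  · obtain ⟨p, hp, hτp⟩ := hτ
    rw [F.sum_eq_single_of_mem p hp fun q hq hqp =>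
      hg0 q hq τ fun hτq => hqp (hdisj.elim_set hq hp τ hτq hτp)]
    exact hgb p hp τ hτp
  · push Not at hτ
    rw [F.sum_eq_zero fun p hp => hg0 p hp τ (hτ p hp), sub_zero]
    exact hbij τ fun hτF => hτ τ hτF (mem_closedBall_self hr.le)
end
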